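/- arXiv:1610.06648 — 9 statements merged into one kernel-verified Lean document; each statement's English description precedes it below -/
import Mathlib

section
/- Let F and D be finite types (with decidable equality). For i = 1, 2 let E_i : Matrix F F ℝ, B_i : Matrix F D ℝ and A_i : Matrix D D ℝ, and suppose the block matrices M_i := Matrix.fromBlocks E_i B_i 0 A_i commute: M_1 * M_2 = M_2 * M_1. Suppose x : D → ℝ and ρ_1, ρ_2 : ℝ satisfy A_i *ᵥ x = ρ_i • x for i = 1, 2, and that the matrices ρ_1 • 1 − E_1 and ρ_2 • 1 − E_2 are invertible (IsUnit). Then (ρ_1 • 1 − E_1)⁻¹ *ᵥ (B_1 *ᵥ x) = (ρ_2 • 1 − E_2)⁻¹ *ᵥ (B_2 *ᵥ x). (This is Proposition 6.1(1) of the paper: the 'exit vector' (ρ(A_{D,i})1_F − E_i)^{-1} B_i x is independent of i.) -/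
/-!
The top-right block of `M₁ M₂ = M₂ M₁`, applied to the common eigenvector `x`, reads
`(ρ₂ - E₂) B₁ x = (ρ₁ - E₁) B₂ x`. The top-left block says that `E₁` and `E₂` commute, hence so
do `ρ₁ - E₁` and `ρ₂ - E₂` and their inverses; multiplying by `(ρ₁ - E₁)⁻¹ (ρ₂ - E₂)⁻¹` gives
the claim.
-/

open Matrix

namespace Matrix

variable {F D R : Type*} [Fintype F] [Fintype D]

theorem commute_fromBlocks_zero₂₁_iff [Semiring R]
    {E₁ E₂ : Matrix F F R} {B₁ B₂ : Matrix F D R} {A₁ A₂ : Matrix D D R} :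
    Commute (fromBlocks E₁ B₁ 0 A₁) (fromBlocks E₂ B₂ 0 A₂) ↔
      Commute E₁ E₂ ∧ E₁ * B₂ + B₁ * A₂ = E₂ * B₁ + B₂ * A₁ ∧ Commute A₁ A₂ := by
  simp only [Commute, SemiconjBy, fromBlocks_multiply, fromBlocks_inj, Matrix.mul_zero,
    Matrix.zero_mul, add_zero, zero_add, true_and]

theorem smul_one_sub_mulVec_mulVec_eq_of_mulVec_eq_smul [CommRing R] [DecidableEq F]
    {E₁ E₂ : Matrix F F R} {B₁ B₂ : Matrix F D R} {A₁ A₂ : Matrix D D R}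
    (hB : E₁ * B₂ + B₁ * A₂ = E₂ * B₁ + B₂ * A₁) {x : D → R} {ρ₁ ρ₂ : R}
    (hx₁ : A₁ *ᵥ x = ρ₁ • x) (hx₂ : A₂ *ᵥ x = ρ₂ • x) :
    (ρ₂ • 1 - E₂) *ᵥ (B₁ *ᵥ x) = (ρ₁ • 1 - E₁) *ᵥ (B₂ *ᵥ x) := by
  have h := congrArg (· *ᵥ x) hB
  simp only [add_mulVec, ← mulVec_mulVec, hx₁, hx₂, mulVec_smul] at h
  simp only [sub_mulVec, smul_mulVec, one_mulVec]
  linear_combination (norm := module) h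

theorem inv_mulVec_eq_inv_mulVec_of_commute [CommRing R] [DecidableEq F]
    {S₁ S₂ : Matrix F F R} (hS : Commute S₁ S₂) (h₁ : IsUnit S₁) (h₂ : IsUnit S₂)
    {v₁ v₂ : F → R} (h : S₂ *ᵥ v₁ = S₁ *ᵥ v₂) :
    S₁⁻¹ *ᵥ v₁ = S₂⁻¹ *ᵥ v₂ := by
  rw [isUnit_iff_isUnit_det] at h₁ h₂
  have hinv : S₁⁻¹ * S₂⁻¹ = S₂⁻¹ * S₁⁻¹ := by
    rw [← mul_inv_rev, ← mul_inv_rev, hS.eq]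
  calc S₁⁻¹ *ᵥ v₁ = S₁⁻¹ *ᵥ (S₂⁻¹ *ᵥ (S₂ *ᵥ v₁)) := by
        rw [mulVec_mulVec v₁ S₂⁻¹, nonsing_inv_mul _ h₂, one_mulVec]
    _ = S₂⁻¹ *ᵥ (S₁⁻¹ *ᵥ (S₁ *ᵥ v₂)) := by
        rw [h, mulVec_mulVec, hinv, ← mulVec_mulVec]
    _ = S₂⁻¹ *ᵥ v₂ := by
        rw [mulVec_mulVec v₂ S₁⁻¹, nonsing_inv_mul _ h₁, one_mulVec]

end Matrix

theorem stmt0_general {F D : Type*} [Fintype F] [Fintype D] [DecidableEq F]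
    (E₁ E₂ : Matrix F F ℝ) (B₁ B₂ : Matrix F D ℝ) (A₁ A₂ : Matrix D D ℝ)
    (hcomm : Matrix.fromBlocks E₁ B₁ 0 A₁ * Matrix.fromBlocks E₂ B₂ 0 A₂ =
      Matrix.fromBlocks E₂ B₂ 0 A₂ * Matrix.fromBlocks E₁ B₁ 0 A₁)
    (x : D → ℝ) (ρ₁ ρ₂ : ℝ)
    (hx₁ : A₁ *ᵥ x = ρ₁ • x) (hx₂ : A₂ *ᵥ x = ρ₂ • x)
    (hU₁ : IsUnit (ρ₁ • (1 : Matrix F F ℝ) - E₁))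
    (hU₂ : IsUnit (ρ₂ • (1 : Matrix F F ℝ) - E₂)) :
    (ρ₁ • (1 : Matrix F F ℝ) - E₁)⁻¹ *ᵥ (B₁ *ᵥ x) =
      (ρ₂ • (1 : Matrix F F ℝ) - E₂)⁻¹ *ᵥ (B₂ *ᵥ x) := by
  obtain ⟨hE, hB, -⟩ := commute_fromBlocks_zero₂₁_iff.mp hcomm
  have hS : Commute (ρ₁ • (1 : Matrix F F ℝ) - E₁) (ρ₂ • 1 - E₂) :=
    ((Commute.one_left _).smul_left ρ₁).sub_left
      (((Commute.one_right _).smul_right ρ₂).sub_right hE)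
  exact inv_mulVec_eq_inv_mulVec_of_commute hS hU₁ hU₂
    (smul_one_sub_mulVec_mulVec_eq_of_mulVec_eq_smul hB hx₁ hx₂)

theorem stmt0 {F D : Type*} [Fintype F] [Fintype D] [DecidableEq F] [DecidableEq D]
    (E₁ E₂ : Matrix F F ℝ) (B₁ B₂ : Matrix F D ℝ) (A₁ A₂ : Matrix D D ℝ)
    (hcomm : Matrix.fromBlocks E₁ B₁ 0 A₁ * Matrix.fromBlocks E₂ B₂ 0 A₂ =
      Matrix.fromBlocks E₂ B₂ 0 A₂ * Matrix.fromBlocks E₁ B₁ 0 A₁)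
    (x : D → ℝ) (ρ₁ ρ₂ : ℝ)
    (hx₁ : A₁ *ᵥ x = ρ₁ • x) (hx₂ : A₂ *ᵥ x = ρ₂ • x)
    (hU₁ : IsUnit (ρ₁ • (1 : Matrix F F ℝ) - E₁))
    (hU₂ : IsUnit (ρ₂ • (1 : Matrix F F ℝ) - E₂)) :
    (ρ₁ • (1 : Matrix F F ℝ) - E₁)⁻¹ *ᵥ (B₁ *ᵥ x) =
      (ρ₂ • (1 : Matrix F F ℝ) - E₂)⁻¹ *ᵥ (B₂ *ᵥ x) :=
  stmt0_general E₁ E₂ B₁ B₂ A₁ A₂ hcomm x ρ₁ ρ₂ hx₁ hx₂ hU₁ hU₂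
end

section
/- Let F and D be finite types. For i = 1, 2 let E_i : Matrix F F ℝ, B_i : Matrix F D ℝ and A_i : Matrix D D ℝ satisfy the commutation relation E_1 * B_2 + B_1 * A_2 = E_2 * B_1 + B_2 * A_1 (an equality of F×D matrices). Suppose x : D → ℝ and ρ_1, ρ_2 : ℝ satisfy A_i *ᵥ x = ρ_i • x for i = 1, 2. Then (ρ_1 • 1 − E_1) *ᵥ (B_2 *ᵥ x) = (ρ_2 • 1 − E_2) *ᵥ (B_1 *ᵥ x). (This is the key identity established in the proof of Proposition 6.1; the commutation relation is exactly the top-right block of the relation A_iA_j = A_jA_i for the vertex matrices of a k-graph.) -/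
open Matrix

theorem smul_one_sub_mulVec_mulVec_of_mulVec_eq_smul {R m n : Type*} [CommRing R]
    [Fintype m] [Fintype n] [DecidableEq m] (E : Matrix m m R) (B : Matrix m n R)
    {A : Matrix n n R} {x : n → R} {ρ : R} (hx : A *ᵥ x = ρ • x) :
    (ρ • (1 : Matrix m m R) - E) *ᵥ (B *ᵥ x) = (B * A - E * B) *ᵥ x := by
  rw [sub_mulVec, sub_mulVec, ← mulVec_mulVec, ← mulVec_mulVec, hx, smul_mulVec, one_mulVec,
    mulVec_smul]

theorem stmt1 {F D : Type*} [Fintype F] [Fintype D] [DecidableEq F]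
    (E₁ E₂ : Matrix F F ℝ) (B₁ B₂ : Matrix F D ℝ) (A₁ A₂ : Matrix D D ℝ)
    (hcomm : E₁ * B₂ + B₁ * A₂ = E₂ * B₁ + B₂ * A₁)
    (x : D → ℝ) (ρ₁ ρ₂ : ℝ)
    (hx₁ : A₁ *ᵥ x = ρ₁ • x) (hx₂ : A₂ *ᵥ x = ρ₂ • x) :
    (ρ₁ • (1 : Matrix F F ℝ) - E₁) *ᵥ (B₂ *ᵥ x) =
      (ρ₂ • (1 : Matrix F F ℝ) - E₂) *ᵥ (B₁ *ᵥ x) := by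
  have hcomm' : B₂ * A₁ - E₁ * B₂ = B₁ * A₂ - E₂ * B₁ := by
    rw [sub_eq_sub_iff_add_eq_add, add_comm, ← hcomm, add_comm]
  rw [smul_one_sub_mulVec_mulVec_of_mulVec_eq_smul E₁ B₂ hx₁,
    smul_one_sub_mulVec_mulVec_of_mulVec_eq_smul E₂ B₁ hx₂, hcomm']
end

section
/- Let V be a finite type, A : Matrix V V ℝ a matrix with nonnegative entries, m : V → ℝ an entrywise nonnegative vector, and ρ : ℝ with 0 ≤ ρ. Suppose the subinvariance inequality A *ᵥ m ≤ ρ • m holds entrywise. Then: (a) for every n : ℕ, A^n *ᵥ m ≤ ρ^n • m entrywise; and (b) if v, w : V, n : ℕ and S is a finite set of vertices with w ∉ S such that 0 < (A^n) v w and ρ^n * m v ≤ ∑_{u ∈ S} (A^n) v u * m u, then m w = 0. (This is the key computation in the proof of Theorem 5.1: if a subinvariant vector restricts to a Perron–Frobenius eigenvector on a critical component C, then it vanishes at every vertex w reachable from C by paths of the critical colour.) -/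
open Matrix

/-! Since a nonnegative matrix acts monotonically on vectors, the subinvariance `A *ᵥ m ≤ ρ • m`
iterates to `A ^ n *ᵥ m ≤ ρ ^ n • m`. If the terms of `(A ^ n *ᵥ m) v` indexed by `S` alone
already reach the bound `ρ ^ n * m v`, every remaining term `(A ^ n) v w * m w` must vanish. -/

namespace Matrix

variable {ι κ R : Type*} [Fintype ι]

section OrderedSemiring

variable [CommSemiring R] [PartialOrder R] [IsOrderedRing R]

theorem mulVec_mono_of_nonneg {A : Matrix κ ι R} (hA : ∀ i j, 0 ≤ A i j) {x y : ι → R}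
    (hxy : x ≤ y) : A *ᵥ x ≤ A *ᵥ y := fun i =>
  Finset.sum_le_sum fun j _ => mul_le_mul_of_nonneg_left (hxy j) (hA i j)

theorem pow_mulVec_le_of_mulVec_le [DecidableEq ι] {A : Matrix ι ι R} (hA : ∀ i j, 0 ≤ A i j)
    {m : ι → R} {ρ : R} (hρ : 0 ≤ ρ) (hsub : A *ᵥ m ≤ ρ • m) (n : ℕ) :
    A ^ n *ᵥ m ≤ ρ ^ n • m := by
  induction n with
  | zero => simp
  | succ k ih =>
    calc A ^ (k + 1) *ᵥ m = A ^ k *ᵥ (A *ᵥ m) := by rw [pow_succ, mulVec_mulVec]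
      _ ≤ A ^ k *ᵥ (ρ • m) := mulVec_mono_of_nonneg (pow_apply_nonneg hA k) hsub
      _ = ρ • (A ^ k *ᵥ m) := mulVec_smul _ _ _
      _ ≤ ρ • (ρ ^ k • m) := smul_le_smul_of_nonneg_left ih hρ
      _ = ρ ^ (k + 1) • m := by rw [smul_smul, pow_succ']

end OrderedSemiring

theorem apply_eq_zero_of_mulVec_apply_le_sum [CommRing R] [LinearOrder R] [IsStrictOrderedRing R]
    {A : Matrix κ ι R} {m : ι → R} {v : κ} {w : ι} {S : Finset ι}
    (hA : ∀ u, 0 ≤ A v u) (hm : ∀ u, 0 ≤ m u) (hwS : w ∉ S) (hvw : 0 < A v w)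
    (hS : (A *ᵥ m) v ≤ ∑ u ∈ S, A v u * m u) : m w = 0 := by
  classical
  have hterm_nonneg : ∀ u, 0 ≤ A v u * m u := fun u => mul_nonneg (hA u) (hm u)
  have hinsert : ∑ u ∈ insert w S, A v u * m u ≤ (A *ᵥ m) v :=
    Finset.sum_le_univ_sum_of_nonneg hterm_nonneg
  rw [Finset.sum_insert hwS] at hinsert
  have hw_term : A v w * m w = 0 := le_antisymm (by linarith) (hterm_nonneg w)
  exact (mul_eq_zero.mp hw_term).resolve_left hvw.ne'

end Matrix

theorem stmt6 {V : Type*} [Fintype V] [DecidableEq V]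
    (A : Matrix V V ℝ) (hA : ∀ i j, 0 ≤ A i j) (m : V → ℝ) (hm : ∀ v, 0 ≤ m v)
    (ρ : ℝ) (hρ : 0 ≤ ρ) (hsub : A *ᵥ m ≤ ρ • m) :
    (∀ n : ℕ, A ^ n *ᵥ m ≤ ρ ^ n • m) ∧
      (∀ (v w : V) (n : ℕ) (S : Finset V), w ∉ S → 0 < (A ^ n) v w →
        ρ ^ n * m v ≤ ∑ u ∈ S, (A ^ n) v u * m u → m w = 0) := by
  have hpow := pow_mulVec_le_of_mulVec_le hA hρ hsub
  refine ⟨hpow, fun v w n S hwS hvw hS => ?_⟩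
  exact apply_eq_zero_of_mulVec_apply_le_sum (pow_apply_nonneg hA n v) hm hwS hvw
    ((hpow n v).trans hS)
end

section
/- Let V be a finite nonempty type and r : V → V → Prop a relation such that every vertex has a successor: for all v there exists w with r v w. Then there exists a vertex v lying on a cycle (Relation.TransGen r v v) whose strongly connected component has no exit: for every w, if Relation.ReflTransGen r v w then Relation.ReflTransGen r w v. (This is the first claim established in the proof of Proposition 3.1: a finite k-graph without sinks or sources has at least one strongly connected component that is forwards hereditary.) -/
/-!
Strict reachability is a strict order, hence well-founded on a finite type, so some vertex `v`
strictly reaches nothing: everything it reaches leads back to it. Any edge `v → u` then closes a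
cycle through `v`.
-/

namespace Relation

variable {V : Type*} {r : V → V → Prop}

def StrictlyReaches (r : V → V → Prop) (a b : V) : Prop :=
  ReflTransGen r a b ∧ ¬ ReflTransGen r b a

instance : IsTrans V (StrictlyReaches r) :=
  ⟨fun _ _ _ ⟨hab, hba⟩ ⟨hbc, _⟩ => ⟨hab.trans hbc, fun hca => hba (hbc.trans hca)⟩⟩

instance : Std.Irrefl (StrictlyReaches r) :=
  ⟨fun _ ⟨haa, hnaa⟩ => hnaa haa⟩

theorem exists_forall_reflTransGen_imp_reflTransGen [Finite V] [Nonempty V]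
    (r : V → V → Prop) : ∃ v, ∀ w, ReflTransGen r v w → ReflTransGen r w v := by
  obtain ⟨v, -, hv⟩ :=
    (Finite.wellFounded_of_trans_of_irrefl (Function.swap (StrictlyReaches r))).has_min
      Set.univ Set.univ_nonempty
  exact ⟨v, fun w hvw => not_not.mp fun hwv => hv w trivial ⟨hvw, hwv⟩⟩

theorem transGen_self_of_forall_reflTransGen_imp_reflTransGen {v u : V} (hvu : r v u)
    (hv : ∀ w, ReflTransGen r v w → ReflTransGen r w v) : TransGen r v v :=
  TransGen.head' hvu (hv u (ReflTransGen.single hvu))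

end Relation

theorem stmt8 {V : Type*} [Fintype V] [Nonempty V] (r : V → V → Prop)
    (hsucc : ∀ v, ∃ w, r v w) :
    ∃ v, Relation.TransGen r v v ∧
      ∀ w, Relation.ReflTransGen r v w → Relation.ReflTransGen r w v := by
  obtain ⟨v, hv⟩ := Relation.exists_forall_reflTransGen_imp_reflTransGen r
  obtain ⟨u, hvu⟩ := hsucc v
  exact ⟨v, Relation.transGen_self_of_forall_reflTransGen_imp_reflTransGen hvu hv, hv⟩
end

section
/- Let V be a finite type and let s, r : V → V → Prop be relations with s ≤ r (every s-edge is an r-edge). Assume: (i) every vertex has an s-successor and an s-predecessor (for all v there exist w, w' with s v w and s w' v); (ii) C and D are disjoint subsets of V, each strongly connected for r (any two of its elements are mutually r-reachable); (iii) every vertex lying on an r-cycle belongs to C ∪ D; and (iv) no element of D is r-reachable from any element of C (for all c ∈ C, d ∈ D, ¬ Relation.ReflTransGen r c d). Then for every vertex w ∉ C ∪ D there exist c ∈ C with Relation.ReflTransGen s w c and d ∈ D with Relation.ReflTransGen s d w; that is, w admits a single-colour path into C and receives a single-colour path from D. (This is Lemma 7.2 of the paper, stated for the reachability relation r of the whole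 k-graph and the edge relation s of one coordinate colour.) -/
/-!
Since every vertex has an `s`-successor and `V` is finite, the forward `s`-walk from `w` eventually
enters an `s`-cycle, at a vertex `x`; backwards, an `s`-walk into `w` starts from an `s`-cycle
vertex `y`. Both cycles are `r`-cycles, so `x, y ∈ C ∪ D`. They cannot lie in the same strongly
connected set, as then `w →* x →* y →* w` would be an `r`-cycle through `w ∉ C ∪ D`; and `x ∈ D`,
`y ∈ C` is impossible because `y →* w →* x` would reach `D` from `C`. Hence `x ∈ C` and `y ∈ D`.
-/

open Function Relation

section

variable {V : Type*} {s : V → V → Prop} {f : V → V}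

theorem Relation.reflTransGen_iterate (hf : ∀ v, s v (f v)) (n : ℕ) (v : V) :
    ReflTransGen s v (f^[n] v) := by
  induction n generalizing v with
  | zero => exact .refl
  | succ n ih => exact .head (hf v) (ih (f v))

theorem Relation.transGen_iterate (hf : ∀ v, s v (f v)) {n : ℕ} (hn : n ≠ 0) (v : V) :
    TransGen s v (f^[n] v) := by
  obtain ⟨m, rfl⟩ := Nat.exists_eq_succ_of_ne_zero hn
  exact .head' (hf v) (reflTransGen_iterate hf m (f v))

theorem Function.exists_iterate_mem_periodicPts [Finite V] (f : V → V) (v : V) :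
    ∃ n, f^[n] v ∈ periodicPts f := by
  obtain ⟨a, b, hne, hab⟩ := Finite.exists_ne_map_eq_of_infinite (f^[·] v)
  wlog hlt : a < b generalizing a b
  · exact this b a hne.symm hab.symm (hne.lt_or_gt.resolve_left hlt)
  refine ⟨a, mk_mem_periodicPts (Nat.sub_pos_of_lt hlt) ?_⟩
  change f^[b - a] (f^[a] v) = f^[a] v
  rw [← iterate_add_apply, Nat.sub_add_cancel hlt.le, ← hab]

theorem Relation.exists_reflTransGen_transGen_self [Finite V] (hs : ∀ v, ∃ w, s v w) (v : V) :
    ∃ x, ReflTransGen s v x ∧ TransGen s x x := by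
  choose f hf using hs
  obtain ⟨n, hper⟩ := exists_iterate_mem_periodicPts f v
  obtain ⟨p, hp, hfix⟩ := hper
  refine ⟨f^[n] v, reflTransGen_iterate hf n v, ?_⟩
  simpa only [hfix.eq] using transGen_iterate hf hp.ne' (f^[n] v)

theorem Relation.exists_transGen_self_reflTransGen [Finite V] (hs : ∀ v, ∃ w, s w v) (v : V) :
    ∃ y, TransGen s y y ∧ ReflTransGen s y v := by
  obtain ⟨y, hvy, hyy⟩ := exists_reflTransGen_transGen_self (s := swap s) hs v
  exact ⟨y, transGen_swap.mp hyy, reflTransGen_swap.mp hvy⟩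

theorem Relation.transGen_self_of_reflTransGen_of_ne {r : V → V → Prop} {a b : V}
    (hab : ReflTransGen r a b) (hba : ReflTransGen r b a) (hne : a ≠ b) : TransGen r a a := by
  rcases reflTransGen_iff_eq_or_transGen.mp hab with rfl | hab
  · exact absurd rfl hne
  · exact hab.trans_left hba

end

theorem stmt9_general {V : Type*} [Fintype V] (s r : V → V → Prop)
    (hsr : ∀ v w, s v w → r v w)
    (hs_succ : ∀ v, ∃ w, s v w) (hs_pred : ∀ v, ∃ w, s w v)
    (C D : Set V)
    (hC : ∀ u ∈ C, ∀ v ∈ C, Relation.ReflTransGen r u v)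
    (hD : ∀ u ∈ D, ∀ v ∈ D, Relation.ReflTransGen r u v)
    (hcycle : ∀ v, Relation.TransGen r v v → v ∈ C ∪ D)
    (hCD : ∀ c ∈ C, ∀ d ∈ D, ¬ Relation.ReflTransGen r c d)
    (w : V) (hw : w ∉ C ∪ D) :
    (∃ c ∈ C, Relation.ReflTransGen s w c) ∧
      (∃ d ∈ D, Relation.ReflTransGen s d w) := by
  obtain ⟨x, hwx, hxx⟩ := exists_reflTransGen_transGen_self hs_succ w
  obtain ⟨y, hyy, hyw⟩ := exists_transGen_self_reflTransGen hs_pred w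
  have hx : x ∈ C ∪ D := hcycle x (TransGen.mono hsr _ _ hxx)
  have hy : y ∈ C ∪ D := hcycle y (TransGen.mono hsr _ _ hyy)
  have hwx_r : ReflTransGen r w x := ReflTransGen.mono hsr _ _ hwx
  have hyw_r : ReflTransGen r y w := ReflTransGen.mono hsr _ _ hyw
  have not_both {S : Set V} (hS : ∀ u ∈ S, ∀ v ∈ S, ReflTransGen r u v) (hxS : x ∈ S)
      (hyS : y ∈ S) : False :=
    hw <| hcycle w <| transGen_self_of_reflTransGen_of_ne hwx_r
      ((hS x hxS y hyS).trans hyw_r) (by rintro rfl; exact hw hx)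
  rcases hx with hxC | hxD <;> rcases hy with hyC | hyD
  · exact (not_both hC hxC hyC).elim
  · exact ⟨⟨x, hxC, hwx⟩, ⟨y, hyD, hyw⟩⟩
  · exact (hCD y hyC x hxD (hyw_r.trans hwx_r)).elim
  · exact (not_both hD hxD hyD).elim

theorem stmt9 {V : Type*} [Fintype V] (s r : V → V → Prop)
    (hsr : ∀ v w, s v w → r v w)
    (hs_succ : ∀ v, ∃ w, s v w) (hs_pred : ∀ v, ∃ w, s w v)
    (C D : Set V) (hdisj : Disjoint C D)
    (hC : ∀ u ∈ C, ∀ v ∈ C, Relation.ReflTransGen r u v)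
    (hD : ∀ u ∈ D, ∀ v ∈ D, Relation.ReflTransGen r u v)
    (hcycle : ∀ v, Relation.TransGen r v v → v ∈ C ∪ D)
    (hCD : ∀ c ∈ C, ∀ d ∈ D, ¬ Relation.ReflTransGen r c d)
    (w : V) (hw : w ∉ C ∪ D) :
    (∃ c ∈ C, Relation.ReflTransGen s w c) ∧
      (∃ d ∈ D, Relation.ReflTransGen s d w) :=
  stmt9_general s r hsr hs_succ hs_pred C D hC hD hcycle hCD w hw
end

section
/- Let V be a finite type and let s, r : V → V → Prop be relations with s ≤ r. Assume: (i) every vertex has an s-successor and an s-predecessor; (ii) C and D are disjoint subsets of V, each strongly connected for r; (iii) every vertex lying on an r-cycle belongs to C ∪ D; (iv) no element of D is r-reachable from any element of C; and (v) there exists a vertex w₀ with w₀ ∉ C ∪ D. Then there exist d ∈ D and c ∈ C with Relation.ReflTransGen s d c: there is a path of the single colour s from D to C. (This is Corollary 7.4 of the paper: if C ∪ D is a proper subset of the vertex set, then there are paths of every colour from D to C.) -/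
/-!
Following the single colour `s` forwards from `w₀` leads, by finiteness, to a vertex `y` on an
`s`-cycle, and following it backwards leads to a vertex `x` on an `s`-cycle, with `x → w₀ → y`.
Both cycles are `r`-cycles, so `x, y ∈ C ∪ D`. If `y` could reach `x` in `r`, then `w₀` would lie
on the `r`-cycle `w₀ → y → x → w₀`, which is excluded since `w₀ ∉ C ∪ D`. This rules out `x` and
`y` lying in the same strongly connected set, while `x ∈ C`, `y ∈ D` contradicts the absence of
`r`-paths from `C` to `D`. Hence `x ∈ D`, `y ∈ C`, and `x → w₀ → y` is the required `s`-path.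
-/

namespace Relation

variable {α : Type*} {s : α → α → Prop} {f : α → α}

theorem reflTransGen_iterate_s10 (hf : ∀ a, s a (f a)) (x : α) (n : ℕ) :
    ReflTransGen s x (f^[n] x) := by
  induction n with
  | zero => exact .refl
  | succ n ih => exact ih.tail (by rw [Function.iterate_succ_apply']; exact hf _)

theorem transGen_iterate_succ (hf : ∀ a, s a (f a)) (x : α) (n : ℕ) :
    TransGen s x (f^[n + 1] x) :=
  TransGen.tail' (reflTransGen_iterate_s10 hf x n) (by rw [Function.iterate_succ_apply']; exact hf _)

theorem transGen_self_of_iterate_eq (hf : ∀ a, s a (f a)) (x : α) {m n : ℕ} (hmn : m < n)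
    (heq : f^[m] x = f^[n] x) : TransGen s (f^[m] x) (f^[m] x) := by
  obtain ⟨k, rfl⟩ := Nat.exists_eq_add_of_lt hmn
  have hcycle := transGen_iterate_succ hf (f^[m] x) k
  rwa [← Function.iterate_add_apply, show k + 1 + m = m + k + 1 by omega, ← heq] at hcycle

theorem exists_reflTransGen_transGen_self_s10 [Finite α] (hs : ∀ a, ∃ b, s a b) (x : α) :
    ∃ y, ReflTransGen s x y ∧ TransGen s y y := by
  choose f hf using hs
  obtain ⟨m, n, hne, heq⟩ := Finite.exists_ne_map_eq_of_infinite (fun k : ℕ => f^[k] x)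
  rcases hne.lt_or_gt with hmn | hnm
  · exact ⟨f^[m] x, reflTransGen_iterate_s10 hf x m, transGen_self_of_iterate_eq hf x hmn heq⟩
  · exact ⟨f^[n] x, reflTransGen_iterate_s10 hf x n, transGen_self_of_iterate_eq hf x hnm heq.symm⟩

end Relation

open Relation in
theorem stmt10_general {V : Type*} [Fintype V] (s r : V → V → Prop)
    (hsr : ∀ v w, s v w → r v w)
    (hs_succ : ∀ v, ∃ w, s v w) (hs_pred : ∀ v, ∃ w, s w v)
    (C D : Set V)
    (hC : ∀ u ∈ C, ∀ v ∈ C, Relation.ReflTransGen r u v)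
    (hD : ∀ u ∈ D, ∀ v ∈ D, Relation.ReflTransGen r u v)
    (hcycle : ∀ v, Relation.TransGen r v v → v ∈ C ∪ D)
    (hCD : ∀ c ∈ C, ∀ d ∈ D, ¬ Relation.ReflTransGen r c d)
    (w₀ : V) (hw₀ : w₀ ∉ C ∪ D) :
    ∃ d ∈ D, ∃ c ∈ C, Relation.ReflTransGen s d c := by
  obtain ⟨y, hw₀y, hyy⟩ := exists_reflTransGen_transGen_self_s10 hs_succ w₀
  obtain ⟨x, hxw₀, hxx⟩ :=
    exists_reflTransGen_transGen_self_s10 (s := Function.swap s) hs_pred w₀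
  rw [reflTransGen_swap] at hxw₀
  rw [transGen_swap] at hxx
  have hy : y ∈ C ∪ D := hcycle y (TransGen.mono hsr _ _ hyy)
  have hx : x ∈ C ∪ D := hcycle x (TransGen.mono hsr _ _ hxx)
  have hrxw₀ : ReflTransGen r x w₀ := ReflTransGen.mono hsr _ _ hxw₀
  have hrw₀y : TransGen r w₀ y :=
    (reflTransGen_iff_eq_or_transGen.mp (ReflTransGen.mono hsr _ _ hw₀y)).resolve_left
      fun h => hw₀ (h ▸ hy)
  have hyx : ¬ ReflTransGen r y x := fun h =>
    hw₀ (hcycle w₀ ((hrw₀y.trans_left h).trans_left hrxw₀))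
  rcases hx with hxC | hxD <;> rcases hy with hyC | hyD
  · exact absurd (hC y hyC x hxC) hyx
  · exact absurd (hrxw₀.trans hrw₀y.to_reflTransGen) (hCD x hxC y hyD)
  · exact ⟨x, hxD, y, hyC, hxw₀.trans hw₀y⟩
  · exact absurd (hD y hyD x hxD) hyx

theorem stmt10 {V : Type*} [Fintype V] (s r : V → V → Prop)
    (hsr : ∀ v w, s v w → r v w)
    (hs_succ : ∀ v, ∃ w, s v w) (hs_pred : ∀ v, ∃ w, s w v)
    (C D : Set V) (hdisj : Disjoint C D)
    (hC : ∀ u ∈ C, ∀ v ∈ C, Relation.ReflTransGen r u v)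
    (hD : ∀ u ∈ D, ∀ v ∈ D, Relation.ReflTransGen r u v)
    (hcycle : ∀ v, Relation.TransGen r v v → v ∈ C ∪ D)
    (hCD : ∀ c ∈ C, ∀ d ∈ D, ¬ Relation.ReflTransGen r c d)
    (w₀ : V) (hw₀ : w₀ ∉ C ∪ D) :
    ∃ d ∈ D, ∃ c ∈ C, Relation.ReflTransGen s d c :=
  stmt10_general s r hsr hs_succ hs_pred C D hC hD hcycle hCD w₀ hw₀
end

section
/- Let V be a finite type and let s, r : V → V → Prop be relations with s ≤ r. Assume: (i) every vertex has an s-successor and an s-predecessor; (ii) C and D are disjoint subsets of V, each strongly connected for r; (iii) every vertex lying on an r-cycle belongs to C ∪ D; and (iv) no element of D is r-reachable from any element of C. Then D is hereditary: for every u : V and d ∈ D, if Relation.ReflTransGen r u d then u ∈ D. (This is Corollary 7.3 of the paper: in a finite k-graph with no sinks or sources and exactly two nontrivial strongly connected components, the component D not lying above the other is hereditary.) -/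
/-!
Following `s`-predecessors backwards from `u` gives an infinite walk in a finite graph, so it
revisits a vertex: some vertex `v` on an `r`-cycle reaches `u`. Since `u` reaches `d ∈ D`, `v`
cannot lie in `C`, hence `v ∈ D`; strong connectivity of `D` then closes the cycle
`u →* d →* v →+ v →* u`, so `u ∈ C ∪ D`, and again `u ∉ C`.
-/

namespace Relation

variable {α : Type*} {r : α → α → Prop}

theorem reflTransGen_iterate_of_rel {g : α → α} (hg : ∀ x, r (g x) x) (n : ℕ) (x : α) :
    ReflTransGen r (g^[n] x) x := by
  induction n with
  | zero => exact .refl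
  | succ n ih =>
    rw [Function.iterate_succ_apply']
    exact ih.head (hg _)

theorem transGen_iterate_succ_of_rel {g : α → α} (hg : ∀ x, r (g x) x) (n : ℕ) (x : α) :
    TransGen r (g^[n + 1] x) x := by
  rw [Function.iterate_succ_apply']
  exact .head' (hg _) (reflTransGen_iterate_of_rel hg n x)

theorem exists_transGen_self_reflTransGen_of_forall_exists_rel [Finite α]
    (hpred : ∀ v, ∃ w, r w v) (u : α) : ∃ v, TransGen r v v ∧ ReflTransGen r v u := by
  choose g hg using hpred
  obtain ⟨i, j, hij, hrepeat⟩ :=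
    Set.finite_univ.exists_lt_map_eq_of_forall_mem (f := fun n => g^[n] u) fun _ => Set.mem_univ _
  obtain ⟨k, rfl⟩ := Nat.exists_eq_add_of_lt hij
  refine ⟨g^[i] u, ?_, reflTransGen_iterate_of_rel hg i u⟩
  have hcycle := transGen_iterate_succ_of_rel hg k (g^[i] u)
  rwa [← Function.iterate_add_apply, add_comm, ← add_assoc, ← hrepeat] at hcycle

end Relation

theorem stmt11_general {V : Type*} [Fintype V] (s r : V → V → Prop)
    (hsr : ∀ v w, s v w → r v w)
    (hs_pred : ∀ v, ∃ w, s w v)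
    (C D : Set V)
    (hD : ∀ u ∈ D, ∀ v ∈ D, Relation.ReflTransGen r u v)
    (hcycle : ∀ v, Relation.TransGen r v v → v ∈ C ∪ D)
    (hCD : ∀ c ∈ C, ∀ d ∈ D, ¬ Relation.ReflTransGen r c d) :
    ∀ u : V, ∀ d ∈ D, Relation.ReflTransGen r u d → u ∈ D := by
  intro u d hd hud
  have mem_D_of_cycle :
      ∀ v, Relation.TransGen r v v → Relation.ReflTransGen r v u → v ∈ D := fun v hv hvu =>
    (hcycle v hv).resolve_left fun hvC => hCD v hvC d hd (hvu.trans hud)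
  obtain ⟨v, hv, hvu⟩ := Relation.exists_transGen_self_reflTransGen_of_forall_exists_rel
    (fun x => (hs_pred x).imp fun w => hsr w x) u
  have hdv : Relation.ReflTransGen r d v := hD d hd v (mem_D_of_cycle v hv hvu)
  exact mem_D_of_cycle u ((Relation.TransGen.trans_right (hud.trans hdv) hv).trans_left hvu) .refl

theorem stmt11 {V : Type*} [Fintype V] (s r : V → V → Prop)
    (hsr : ∀ v w, s v w → r v w)
    (hs_succ : ∀ v, ∃ w, s v w) (hs_pred : ∀ v, ∃ w, s w v)
    (C D : Set V) (hdisj : Disjoint C D)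
    (hC : ∀ u ∈ C, ∀ v ∈ C, Relation.ReflTransGen r u v)
    (hD : ∀ u ∈ D, ∀ v ∈ D, Relation.ReflTransGen r u v)
    (hcycle : ∀ v, Relation.TransGen r v v → v ∈ C ∪ D)
    (hCD : ∀ c ∈ C, ∀ d ∈ D, ¬ Relation.ReflTransGen r c d) :
    ∀ u : V, ∀ d ∈ D, Relation.ReflTransGen r u d → u ∈ D :=
  stmt11_general s r hsr hs_pred C D hD hcycle hCD
end

section
/- Let V be a finite type and r : V → V → Prop a relation such that every vertex has a successor and a predecessor (for all v there exist w, w' with r v w and r w' v). Suppose that any two vertices lying on cycles are mutually reachable: for all u, v, if Relation.TransGen r u u and Relation.TransGen r v v then Relation.ReflTransGen r u v. Then every vertex lies on a cycle (Relation.TransGen r v v for all v), and the graph is strongly connected: Relation.ReflTransGen r u v for all u, v. (This is the claim of §7.1 of the paper: in a finite k-graph with no sinks or sources having exactly one nontrivial strongly connected component C, every vertex connects forwards and backwards to C, so C is the whole vertex set.) -/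
/-!
In a finite graph without sinks every vertex `v` reaches a cycle through some `c`, and without
sources `v` is reached from a cycle through some `c'`. Since `c` reaches `c'`, the closed walk
`v →* c →+ c →* c' →* v` puts `v` on a cycle; then any two vertices are mutually reachable.
-/

namespace Relation

variable {V : Type*} [Finite V] {r : V → V → Prop}

/-- If no cycle were reachable from `v`, then "`a` is a strict successor of a vertex `b`
reachable from `v`" would be a transitive, irreflexive, hence well-founded relation on a finite
type, and a minimal vertex reachable from `v` could have no successor. -/
theorem exists_cycle_reachable_from (hsucc : ∀ v, ∃ w, r v w) (v : V) :
    ∃ c, ReflTransGen r v c ∧ TransGen r c c := by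
  by_contra! hacyclic
  let s : V → V → Prop := fun a b => ReflTransGen r v b ∧ TransGen r b a
  have : IsTrans V s := ⟨fun _ _ _ ⟨_, hba⟩ ⟨hvc, hcb⟩ => ⟨hvc, hcb.trans hba⟩⟩
  have : Std.Irrefl s := ⟨fun a ⟨hva, haa⟩ => hacyclic a hva haa⟩
  obtain ⟨w, hvw, hmin⟩ :=
    (Finite.wellFounded_of_trans_of_irrefl s).has_min {w | ReflTransGen r v w} ⟨v, .refl⟩
  obtain ⟨a, hwa⟩ := hsucc w
  exact hmin a (hvw.tail hwa) ⟨hvw, .single hwa⟩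

theorem exists_cycle_reaching (hpred : ∀ v, ∃ w, r w v) (v : V) :
    ∃ c, ReflTransGen r c v ∧ TransGen r c c := by
  simpa only [reflTransGen_swap, transGen_swap] using
    exists_cycle_reachable_from (r := Function.swap r) hpred v

end Relation

open Relation

theorem stmt12 {V : Type*} [Fintype V] (r : V → V → Prop)
    (hsucc : ∀ v, ∃ w, r v w) (hpred : ∀ v, ∃ w, r w v)
    (hconn : ∀ u v, Relation.TransGen r u u → Relation.TransGen r v v →
      Relation.ReflTransGen r u v) :
    (∀ v, Relation.TransGen r v v) ∧ ∀ u v, Relation.ReflTransGen r u v := by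
  have hcycle : ∀ v, TransGen r v v := by
    intro v
    obtain ⟨c, hvc, hcc⟩ := exists_cycle_reachable_from hsucc v
    obtain ⟨c', hc'v, hc'c'⟩ := exists_cycle_reaching hpred v
    exact TransGen.trans_right hvc (hcc.trans_left ((hconn c c' hcc hc'c').trans hc'v))
  exact ⟨hcycle, fun u v => hconn u v (hcycle u) (hcycle v)⟩
end

section
/- Let m and n be natural numbers with 2 ≤ m and 2 ≤ n. Then the real numbers log m and log n are rationally dependent — that is, there exist integers a and b, not both zero, with a * Real.log m = b * Real.log n — if and only if there exist positive natural numbers k, c, d with c and d coprime (Nat.Coprime c d) such that m = k^c and n = k^d. (This is Proposition A.1 of the paper.) -/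
/-!
Taking absolute values, a nontrivial relation `a * log m = b * log n` between two positive
logarithms has `a, b ≠ 0` and exponentiates to `m ^ |a| = n ^ |b|`. Dividing the exponents by
their gcd `g` gives `m ^ (|a| / g) = n ^ (|b| / g)` with coprime exponents, and unique
factorization makes `m` and `n` powers of a common base.
-/

open Real

theorem Real.exists_pow_eq_pow_of_mul_log_eq_mul_log {x y : ℝ} (hx : 1 < x) (hy : 1 < y)
    {a b : ℤ} (hab : a ≠ 0 ∨ b ≠ 0) (h : a * log x = b * log y) :
    ∃ A B : ℕ, 0 < A ∧ 0 < B ∧ x ^ A = y ^ B := by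
  have hlx : 0 < log x := log_pos hx
  have hly : 0 < log y := log_pos hy
  have habs : (a.natAbs : ℝ) * log x = b.natAbs * log y := by
    simpa only [Nat.cast_natAbs, Int.cast_abs, abs_mul, abs_of_pos hlx, abs_of_pos hly]
      using congrArg abs h
  have ha : a ≠ 0 := by
    rintro rfl
    have hb : 0 < (b.natAbs : ℝ) := by exact_mod_cast Int.natAbs_pos.mpr (by simpa using hab)
    rw [Int.natAbs_zero, Nat.cast_zero, zero_mul] at habs
    exact (mul_pos hb hly).ne habs
  have hb : b ≠ 0 := by
    rintro rfl
    have ha' : 0 < (a.natAbs : ℝ) := by exact_mod_cast Int.natAbs_pos.mpr ha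
    rw [Int.natAbs_zero, Nat.cast_zero, zero_mul] at habs
    exact (mul_pos ha' hlx).ne' habs
  refine ⟨a.natAbs, b.natAbs, Int.natAbs_pos.mpr ha, Int.natAbs_pos.mpr hb, ?_⟩
  refine log_injOn_pos (pow_pos (zero_lt_one.trans hx) _)
    (pow_pos (zero_lt_one.trans hy) _) ?_
  rwa [log_pow, log_pow]

theorem Nat.exists_coprime_pow_eq_of_pow_eq_pow {m n A B : ℕ} (hm : m ≠ 0) (hA : 0 < A)
    (hB : 0 < B) (h : m ^ A = n ^ B) :
    ∃ k c d : ℕ, 0 < k ∧ 0 < c ∧ 0 < d ∧ c.Coprime d ∧ m = k ^ c ∧ n = k ^ d := by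
  obtain ⟨k, hmk, hnk⟩ := Nat.exists_eq_pow_of_pow_eq_pow (Or.inl hA.ne') h
  have hc : 0 < B / A.gcd B := Nat.div_gcd_pos_of_pos_right A hB
  refine ⟨k, B / A.gcd B, A / A.gcd B, Nat.pos_of_ne_zero ?_, hc,
    Nat.div_gcd_pos_of_pos_left B hA,
    (Nat.coprime_div_gcd_div_gcd (Nat.gcd_pos_of_pos_left B hA)).symm, hmk, hnk⟩
  rintro rfl
  exact hm (hmk.trans (zero_pow hc.ne'))

theorem stmt13 (m n : ℕ) (hm : 2 ≤ m) (hn : 2 ≤ n) :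
    (∃ a b : ℤ, (a ≠ 0 ∨ b ≠ 0) ∧ (a : ℝ) * Real.log m = (b : ℝ) * Real.log n) ↔
      ∃ k c d : ℕ, 0 < k ∧ 0 < c ∧ 0 < d ∧ Nat.Coprime c d ∧ m = k ^ c ∧ n = k ^ d := by
  constructor
  · rintro ⟨a, b, hab, h⟩
    obtain ⟨A, B, hA, hB, hpow⟩ := Real.exists_pow_eq_pow_of_mul_log_eq_mul_log
      (by exact_mod_cast hm) (by exact_mod_cast hn) hab h
    exact Nat.exists_coprime_pow_eq_of_pow_eq_pow (by omega) hA hB (by exact_mod_cast hpow)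
  · rintro ⟨k, c, d, -, -, hd, -, rfl, rfl⟩
    refine ⟨d, c, Or.inl (by exact_mod_cast hd.ne'), ?_⟩
    push_cast
    rw [log_pow, log_pow]
    ring
end
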